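/- arXiv:2509.07276 — 3 statements merged into one kernel-verified Lean document; each statement's English description precedes it below -/
import Mathlib

section
/- Let n ≥ 10 and let 𝒫 be a 2-wise independent distribution on functions p : 𝔽₂ⁿ → 𝔽₂ conditioned (or restricted) so that every p in the support has at least one root. Define the error distribution mass at e as E_p[|Ŵ^p(e)|²], where Ŵ^p is the Fourier transform of the normalized root-indicator of p. Then E_p[|Ŵ^p(0)|²] = 1/2 and for every nonzero e ∈ 𝔽₂ⁿ, E_p[|Ŵ^p(e)|²] ≤ 2^{−n/2}. -/
namespace Stmt9Aux

variable {n : ℕ}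

noncomputable def chi (e z : Fin n → ZMod 2) : ℝ := (-1) ^ (∑ i, e i * z i : ZMod 2).val

noncomputable def ind (p : (Fin n → ZMod 2) → ZMod 2) (z : Fin n → ZMod 2) : ℝ :=
  if p z = 0 then 1 else 0

noncomputable def Sf (p : (Fin n → ZMod 2) → ZMod 2) (e : Fin n → ZMod 2) : ℝ :=
  ∑ z, ind p z * chi e z

def Np (p : (Fin n → ZMod 2) → ZMod 2) : ℕ :=
  (Finset.univ.filter (fun z => p z = 0)).card

lemma chi_zero (z : Fin n → ZMod 2) : chi 0 z = 1 := by simp [chi]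

lemma chi_sq (e z : Fin n → ZMod 2) : chi e z ^ 2 = 1 := by
  rw [chi, ← pow_mul, mul_comm, pow_mul]; norm_num

lemma abs_chi (e z : Fin n → ZMod 2) : |chi e z| = 1 := by
  have := chi_sq e z
  nlinarith [abs_nonneg (chi e z), sq_abs (chi e z)]

lemma card_univ_V : (Finset.univ : Finset (Fin n → ZMod 2)).card = 2 ^ n := by
  simp [Finset.card_univ]

lemma sum_ind (p : (Fin n → ZMod 2) → ZMod 2) : ∑ z, ind p z = (Np p : ℝ) := by
  simp [ind, Np, Finset.sum_boole]

lemma Sf_zero (p : (Fin n → ZMod 2) → ZMod 2) : Sf p 0 = (Np p : ℝ) := by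
  rw [Sf, Finset.sum_congr rfl fun z _ => by rw [chi_zero, mul_one], sum_ind]

lemma Np_le (p : (Fin n → ZMod 2) → ZMod 2) : Np p ≤ 2 ^ n := by
  rw [Np, ← card_univ_V]; exact Finset.card_filter_le _ _

lemma abs_Sf_le (p : (Fin n → ZMod 2) → ZMod 2) (e : Fin n → ZMod 2) :
    |Sf p e| ≤ (Np p : ℝ) := by
  rw [Sf, ← sum_ind]
  refine (Finset.abs_sum_le_sum_abs _ _).trans (Finset.sum_le_sum fun z _ => ?_)
  rw [abs_mul, abs_chi, mul_one]
  exact le_abs_self _ |>.trans (le_of_eq (abs_abs _)) |>.trans (by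
    rw [ind]; split_ifs <;> simp)

lemma neg_one_pow_val_add_one (x : ZMod 2) :
    (-1 : ℝ) ^ (x + 1).val = -(-1) ^ x.val := by
  have h : x = 0 ∨ x = 1 := by revert x; decide
  rcases h with h | h <;> subst h
  · rw [show ((0:ZMod 2)+1).val = 1 from rfl, show ((0:ZMod 2)).val = 0 from rfl]; norm_num
  · rw [show ((1:ZMod 2)+1).val = 0 from rfl, show ((1:ZMod 2)).val = 1 from rfl]; norm_num

lemma sum_chi {e : Fin n → ZMod 2} (he : e ≠ 0) : ∑ z, chi e z = 0 := by
  obtain ⟨i, hi⟩ : ∃ i, e i ≠ 0 := by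
    by_contra h; push_neg at h; exact he (funext h)
  have hei : e i = 1 := by
    have : ∀ x : ZMod 2, x ≠ 0 → x = 1 := by decide
    exact this _ hi
  set s : Fin n → ZMod 2 := Pi.single i 1 with hs
  have hkey : ∀ z, chi e (z + s) = -chi e z := by
    intro z
    have h1 : (∑ j, e j * (z + s) j) = (∑ j, e j * z j) + 1 := by
      have : ∀ j, e j * (z + s) j = e j * z j + e j * s j := by
        intro j; simp [mul_add]
      rw [Finset.sum_congr rfl fun j _ => this j, Finset.sum_add_distrib]
      congr 1
      rw [hs]
      simp [Pi.single_apply, mul_ite, Finset.sum_ite_eq', hei]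
    rw [chi, chi, h1, neg_one_pow_val_add_one]
  have hbij : ∑ z, chi e (z + s) = ∑ z, chi e z :=
    Fintype.sum_equiv (Equiv.addRight s) _ _ (fun z => rfl)
  have h2 : ∑ z, chi e z = ∑ z, -chi e z := by
    rw [← hbij]; exact Finset.sum_congr rfl fun z _ => hkey z
  rw [Finset.sum_neg_distrib] at h2
  linarith

variable (w : ((Fin n → ZMod 2) → ZMod 2) → ℝ)
variable (h2 : ∀ x y : Fin n → ZMod 2, x ≠ y → ∀ a₁ a₂ : ZMod 2,
      ∑ p ∈ Finset.univ.filter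
        (fun p : (Fin n → ZMod 2) → ZMod 2 => p x = a₁ ∧ p y = a₂), w p = 1/4)

include h2

lemma prob_pair {z z' : Fin n → ZMod 2} (hne : z ≠ z') (a b : ZMod 2) :
    ∑ p, (if p z = a ∧ p z' = b then w p else 0) = 1/4 := by
  rw [← Finset.sum_filter]; exact h2 z z' hne a b

lemma prob_single (hn : 0 < n) (z : Fin n → ZMod 2) :
    ∑ p, (if p z = 0 then w p else 0) = 1/2 := by
  set z' : Fin n → ZMod 2 := z + Pi.single ⟨0, hn⟩ 1 with hz'
  have hne : z ≠ z' := by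
    intro h
    have h0 := congrFun h ⟨0, hn⟩
    rw [hz'] at h0
    simp [Pi.single_apply] at h0
  have split : ∀ p : (Fin n → ZMod 2) → ZMod 2, (if p z = 0 then w p else 0) =
      (if p z = 0 ∧ p z' = 0 then w p else 0) + (if p z = 0 ∧ p z' = 1 then w p else 0) := by
    intro p
    have h01 : ∀ x : ZMod 2, x = 0 ∨ x = 1 := by decide
    by_cases h0 : p z = 0 <;> rcases h01 (p z') with h | h <;> simp [h0, h]
  rw [Finset.sum_congr rfl fun p _ => split p, Finset.sum_add_distrib,
    prob_pair w h2 hne 0 0, prob_pair w h2 hne 0 1]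
  norm_num

lemma qlem (hn : 0 < n) (z z' : Fin n → ZMod 2) :
    ∑ p, w p * (ind p z * ind p z') = if z = z' then (1:ℝ)/2 else 1/4 := by
  by_cases h : z = z'
  · subst h; rw [if_pos rfl]
    have key : ∀ p : (Fin n → ZMod 2) → ZMod 2,
        w p * (ind p z * ind p z) = if p z = 0 then w p else 0 := by
      intro p; by_cases h0 : p z = 0 <;> simp [ind, h0]
    rw [Finset.sum_congr rfl fun p _ => key p]
    exact prob_single w h2 hn z
  · rw [if_neg h]
    have key : ∀ p : (Fin n → ZMod 2) → ZMod 2,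
        w p * (ind p z * ind p z') = if p z = 0 ∧ p z' = 0 then w p else 0 := by
      intro p
      by_cases h0 : p z = 0 <;> by_cases h1 : p z' = 0 <;> simp [ind, h0, h1]
    rw [Finset.sum_congr rfl fun p _ => key p]
    exact prob_pair w h2 h 0 0

lemma moment (hn : 0 < n) (e : Fin n → ZMod 2) :
    ∑ p, w p * (Sf p e) ^ 2 = (∑ z, chi e z) ^ 2 / 4 + 2 ^ n / 4 := by
  have expand : ∀ p : (Fin n → ZMod 2) → ZMod 2, w p * (Sf p e) ^ 2 =
      ∑ z, ∑ z', (chi e z * chi e z') * (w p * (ind p z * ind p z')) := by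
    intro p
    rw [sq, Sf, Finset.sum_mul_sum, Finset.mul_sum]
    refine Finset.sum_congr rfl fun z _ => ?_
    rw [Finset.mul_sum]
    exact Finset.sum_congr rfl fun z' _ => by ring
  rw [Finset.sum_congr rfl fun p _ => expand p, Finset.sum_comm]
  rw [Finset.sum_congr rfl fun z _ => Finset.sum_comm]
  have inner : ∀ z z' : Fin n → ZMod 2,
      ∑ p, (chi e z * chi e z') * (w p * (ind p z * ind p z')) =
      (chi e z * chi e z') / 4 + (if z = z' then (chi e z * chi e z') / 4 else 0) := by
    intro z z'
    rw [← Finset.mul_sum, qlem w h2 hn z z']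
    by_cases h : z = z' <;> simp [h] <;> ring
  rw [Finset.sum_congr rfl fun z _ => Finset.sum_congr rfl fun z' _ => inner z z']
  rw [Finset.sum_congr rfl fun z _ => Finset.sum_add_distrib, Finset.sum_add_distrib]
  congr 1
  · rw [sq, Finset.sum_mul_sum]
    rw [Finset.sum_div, Finset.sum_congr rfl fun z (_ : z ∈ Finset.univ) => (Finset.sum_div _ _ _).symm]
  · have diag : ∀ z : Fin n → ZMod 2,
        (∑ z', if z = z' then (chi e z * chi e z') / 4 else 0) = (1:ℝ)/4 := by
      intro z
      rw [Finset.sum_ite_eq]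
      simp only [Finset.mem_univ, if_pos, ← sq, chi_sq]
    rw [Finset.sum_congr rfl fun z _ => diag z, Finset.sum_const, card_univ_V]
    rw [nsmul_eq_mul]
    push_cast
    ring

lemma EN (hn : 0 < n) : ∑ p, w p * (Np p : ℝ) = 2 ^ n / 2 := by
  have key : ∀ p : (Fin n → ZMod 2) → ZMod 2,
      w p * (Np p : ℝ) = ∑ z, (if p z = 0 then w p else 0) := by
    intro p; rw [← sum_ind, Finset.mul_sum]
    exact Finset.sum_congr rfl fun z _ => by rw [ind]; split_ifs <;> ring
  rw [Finset.sum_congr rfl fun p _ => key p, Finset.sum_comm,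
    Finset.sum_congr rfl fun z _ => prob_single w h2 hn z, Finset.sum_const, card_univ_V,
    nsmul_eq_mul]
  push_cast
  ring

end Stmt9Aux

open Stmt9Aux in
/-- Let `n ≥ 10` and let `𝒫` (mass function `w`) be a 2-wise independent
distribution on `p : 𝔽₂ⁿ → 𝔽₂` whose support consists of functions with at least one root.
With `Ŵ^p` the Fourier transform of the normalized root-indicator of `p`:
`E_p[|Ŵ^p(0)|²] = 1/2`, and `E_p[|Ŵ^p(e)|²] ≤ 2^{-n/2}` for every nonzero `e`. -/
theorem stmt_9 (n : ℕ) (hn : 10 ≤ n) (w : ((Fin n → ZMod 2) → ZMod 2) → ℝ)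
    (hw0 : ∀ p, 0 ≤ w p) (hw1 : ∑ p, w p = 1)
    (h2 : ∀ x y : Fin n → ZMod 2, x ≠ y → ∀ a₁ a₂ : ZMod 2,
      ∑ p ∈ Finset.univ.filter
        (fun p : (Fin n → ZMod 2) → ZMod 2 => p x = a₁ ∧ p y = a₂), w p = 1/4)
    (hsupp : ∀ p, w p ≠ 0 → ∃ x, p x = 0)
    (What : ((Fin n → ZMod 2) → ZMod 2) → (Fin n → ZMod 2) → ℝ)
    (hWhat : ∀ p e, What p e = (Real.sqrt (2 ^ n))⁻¹ *
        ∑ z, (if p z = 0 then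
            (Real.sqrt ((Finset.univ.filter (fun z' => p z' = 0)).card))⁻¹ else 0) *
          (-1 : ℝ) ^ (∑ i, e i * z i : ZMod 2).val) :
    (∑ p, w p * (What p 0) ^ 2 = 1 / 2) ∧
    ∀ e : Fin n → ZMod 2, e ≠ 0 →
      ∑ p, w p * (What p e) ^ 2 ≤ (2 : ℝ) ^ (-(n : ℝ) / 2) := by
  have npos : 0 < n := by omega
  have hM : (0:ℝ) < 2 ^ n := by positivity
  -- squared formula for What
  have Whatsq : ∀ p e, (What p e) ^ 2 =
      ((2:ℝ) ^ n)⁻¹ * ((Np p : ℝ))⁻¹ * (Sf p e) ^ 2 := by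
    intro p e
    have hsum : (∑ z, (if p z = 0 then
        (Real.sqrt ((Finset.univ.filter (fun z' => p z' = 0)).card))⁻¹ else 0) *
          (-1 : ℝ) ^ (∑ i, e i * z i : ZMod 2).val)
        = (Real.sqrt (Np p))⁻¹ * Sf p e := by
      rw [Sf, Finset.mul_sum]
      refine Finset.sum_congr rfl fun z _ => ?_
      rw [ind, chi]
      split_ifs with h
      · rw [Np]; ring
      · ring
    rw [hWhat, hsum]
    have e1 : ((Real.sqrt (2 ^ n))⁻¹) ^ 2 = ((2:ℝ) ^ n)⁻¹ := by
      rw [inv_pow, Real.sq_sqrt (by positivity)]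
    have e2 : ((Real.sqrt (Np p))⁻¹) ^ 2 = ((Np p : ℝ))⁻¹ := by
      rw [inv_pow, Real.sq_sqrt (Nat.cast_nonneg _)]
    rw [mul_pow, mul_pow, e1, e2, ← mul_assoc]
  -- supported p have at least one root
  have hNp1 : ∀ p, w p ≠ 0 → 1 ≤ Np p := by
    intro p hw
    obtain ⟨x, hx⟩ := hsupp p hw
    rw [Np, Nat.one_le_iff_ne_zero, ← Nat.pos_iff_ne_zero, Finset.card_pos]
    exact ⟨x, by simp [hx]⟩
  constructor
  · -- first claim
    have hpt : ∀ p : (Fin n → ZMod 2) → ZMod 2,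
        w p * (What p 0) ^ 2 = ((2:ℝ) ^ n)⁻¹ * (w p * (Np p : ℝ)) := by
      intro p
      by_cases hw : w p = 0
      · simp [hw]
      · have hN : (0:ℝ) < (Np p : ℝ) := by exact_mod_cast hNp1 p hw
        rw [Whatsq, Sf_zero]
        field_simp
    rw [Finset.sum_congr rfl fun p _ => hpt p, ← Finset.mul_sum, EN w h2 npos]
    field_simp
  · -- second claim
    intro e he
    have hES2 : ∑ p, w p * (Sf p e) ^ 2 = 2 ^ n / 4 := by
      rw [moment w h2 npos e, sum_chi he]
      norm_num
    have hEN2 : ∑ p, w p * (Sf p 0) ^ 2 = (2 ^ n) ^ 2 / 4 + 2 ^ n / 4 := by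
      rw [moment w h2 npos 0]
      congr 2
      rw [Finset.sum_congr rfl fun z _ => chi_zero z, Finset.sum_const, card_univ_V,
        nsmul_eq_mul]
      push_cast; ring
    have hcheb : ∑ p, w p * ((Np p : ℝ) - 2 ^ n / 2) ^ 2 = 2 ^ n / 4 := by
      have expand : ∀ p : (Fin n → ZMod 2) → ZMod 2,
          w p * ((Np p : ℝ) - 2 ^ n / 2) ^ 2 =
          w p * (Sf p 0) ^ 2 - 2 ^ n * (w p * (Np p : ℝ)) + ((2:ℝ) ^ n) ^ 2 / 4 * w p := by
        intro p; rw [Sf_zero]; ring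
      rw [Finset.sum_congr rfl fun p _ => expand p, Finset.sum_add_distrib,
        Finset.sum_sub_distrib, ← Finset.mul_sum, ← Finset.mul_sum, hEN2, EN w h2 npos, hw1]
      ring
    -- tail bound
    set A : Finset ((Fin n → ZMod 2) → ZMod 2) :=
      Finset.univ.filter (fun p => (2:ℝ) ^ n / 4 ≤ (Np p : ℝ)) with hA
    have htail : ∑ p ∈ Aᶜ, w p ≤ 4 / 2 ^ n := by
      have h1 : ∀ p ∈ Aᶜ, w p * ((2:ℝ) ^ n / 4) ^ 2 ≤ w p * ((Np p : ℝ) - 2 ^ n / 2) ^ 2 := by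
        intro p hp
        rw [hA, Finset.mem_compl, Finset.mem_filter] at hp
        push_neg at hp
        have hlt : (Np p : ℝ) < 2 ^ n / 4 := hp (Finset.mem_univ p)
        have hNn : (0:ℝ) ≤ (Np p : ℝ) := Nat.cast_nonneg _
        refine mul_le_mul_of_nonneg_left ?_ (hw0 p)
        nlinarith
      have h2' : ∑ p ∈ Aᶜ, w p * ((2:ℝ) ^ n / 4) ^ 2 ≤ 2 ^ n / 4 := by
        refine (Finset.sum_le_sum h1).trans ?_
        rw [← hcheb]
        refine Finset.sum_le_sum_of_subset_of_nonneg (Finset.subset_univ _) fun p _ _ => ?_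
        exact mul_nonneg (hw0 p) (sq_nonneg _)
      rw [← Finset.sum_mul] at h2'
      rw [le_div_iff₀ hM]
      nlinarith [Finset.sum_nonneg (fun p (_ : p ∈ Aᶜ) => hw0 p), h2', hM]
    -- central bound
    have hcen : ∑ p ∈ A, w p * (What p e) ^ 2 ≤ (2 ^ n)⁻¹ := by
      have h1 : ∀ p ∈ A, w p * (What p e) ^ 2 ≤ w p * ((4 / ((2:ℝ) ^ n) ^ 2) * (Sf p e) ^ 2) := by
        intro p hp
        rw [hA, Finset.mem_filter] at hp
        have hge : (2:ℝ) ^ n / 4 ≤ (Np p : ℝ) := hp.2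
        have hNpos : (0:ℝ) < (Np p : ℝ) := lt_of_lt_of_le (by positivity) hge
        refine mul_le_mul_of_nonneg_left ?_ (hw0 p)
        rw [Whatsq]
        have hinv : ((Np p : ℝ))⁻¹ ≤ ((2:ℝ) ^ n / 4)⁻¹ := by
          apply inv_anti₀ (by positivity) hge
        have hS : (0:ℝ) ≤ (Sf p e) ^ 2 := sq_nonneg _
        calc ((2:ℝ) ^ n)⁻¹ * ((Np p : ℝ))⁻¹ * (Sf p e) ^ 2
            ≤ ((2:ℝ) ^ n)⁻¹ * ((2:ℝ) ^ n / 4)⁻¹ * (Sf p e) ^ 2 := by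
              refine mul_le_mul_of_nonneg_right (mul_le_mul_of_nonneg_left hinv (by positivity)) hS
          _ = (4 / ((2:ℝ) ^ n) ^ 2) * (Sf p e) ^ 2 := by
              rw [inv_div, sq]
              ring
      refine (Finset.sum_le_sum h1).trans ?_
      have h3 : ∑ p ∈ A, w p * ((4 / ((2:ℝ) ^ n) ^ 2) * (Sf p e) ^ 2)
          ≤ ∑ p, w p * ((4 / ((2:ℝ) ^ n) ^ 2) * (Sf p e) ^ 2) := by
        refine Finset.sum_le_sum_of_subset_of_nonneg (Finset.subset_univ _) fun p _ _ => ?_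
        have := hw0 p; positivity
      refine h3.trans ?_
      have h4 : ∑ p, w p * ((4 / ((2:ℝ) ^ n) ^ 2) * (Sf p e) ^ 2)
          = (4 / ((2:ℝ) ^ n) ^ 2) * ∑ p, w p * (Sf p e) ^ 2 := by
        rw [Finset.mul_sum]
        exact Finset.sum_congr rfl fun p _ => by ring
      rw [h4, hES2]
      have heq : (4 / ((2:ℝ) ^ n) ^ 2) * (2 ^ n / 4) = ((2:ℝ) ^ n)⁻¹ := by
        field_simp
      exact le_of_eq heq
    -- per-term bound ≤ w p
    have hle1 : ∀ p, w p * (What p e) ^ 2 ≤ w p := by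
      intro p
      by_cases hw : w p = 0
      · rw [hw]; simp [Whatsq]
      · have hN1 : (1:ℝ) ≤ (Np p : ℝ) := by exact_mod_cast hNp1 p hw
        have hNM : (Np p : ℝ) ≤ 2 ^ n := by exact_mod_cast Np_le p
        have hS := abs_Sf_le p e
        have hSsq : (Sf p e) ^ 2 ≤ ((Np p : ℝ)) ^ 2 := by
          rw [← sq_abs]
          exact pow_le_pow_left₀ (abs_nonneg _) hS 2
        have : (What p e) ^ 2 ≤ 1 := by
          rw [Whatsq]
          rw [mul_assoc]
          have hNpos : (0:ℝ) < (Np p : ℝ) := by linarith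
          have : ((Np p : ℝ))⁻¹ * (Sf p e) ^ 2 ≤ (Np p : ℝ) := by
            rw [inv_mul_le_iff₀ hNpos]
            nlinarith
          calc ((2:ℝ) ^ n)⁻¹ * (((Np p : ℝ))⁻¹ * (Sf p e) ^ 2)
              ≤ ((2:ℝ) ^ n)⁻¹ * (Np p : ℝ) := by
                exact mul_le_mul_of_nonneg_left this (by positivity)
            _ ≤ 1 := by rw [inv_mul_le_iff₀ hM]; linarith
        nlinarith [hw0 p]
    -- combine
    have hsplit : ∑ p, w p * (What p e) ^ 2 =
        (∑ p ∈ A, w p * (What p e) ^ 2) + ∑ p ∈ Aᶜ, w p * (What p e) ^ 2 :=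
      (Finset.sum_add_sum_compl A _).symm
    have htail2 : ∑ p ∈ Aᶜ, w p * (What p e) ^ 2 ≤ 4 / 2 ^ n :=
      (Finset.sum_le_sum fun p _ => hle1 p).trans htail
    have htot : ∑ p, w p * (What p e) ^ 2 ≤ 5 / 2 ^ n := by
      rw [hsplit]
      have : (2:ℝ)^n ≠ 0 := ne_of_gt hM
      calc _ ≤ (2 ^ n)⁻¹ + 4 / 2 ^ n := add_le_add hcen htail2
        _ = 5 / 2 ^ n := by field_simp; ring
    refine htot.trans ?_
    -- 5 / 2^n ≤ 2^(-n/2)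
    have ha : (2:ℝ) ^ (-(n:ℝ)/2) = ((2:ℝ) ^ ((n:ℝ)/2))⁻¹ := by
      rw [neg_div, Real.rpow_neg (by norm_num)]
    have hMa : (2:ℝ) ^ n = (2:ℝ) ^ ((n:ℝ)/2) * (2:ℝ) ^ ((n:ℝ)/2) := by
      rw [← Real.rpow_add (by norm_num), ← Real.rpow_natCast 2 n]
      norm_num
    have h32 : (32:ℝ) ≤ (2:ℝ) ^ ((n:ℝ)/2) := by
      have : (32:ℝ) = (2:ℝ) ^ ((5:ℝ)) := by
        rw [show ((5:ℝ)) = ((5:ℕ):ℝ) by norm_num, Real.rpow_natCast]; norm_num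
      rw [this]
      apply Real.rpow_le_rpow_of_exponent_le (by norm_num)
      have : (10:ℝ) ≤ (n:ℝ) := by exact_mod_cast hn
      linarith
    have hapos : (0:ℝ) < (2:ℝ) ^ ((n:ℝ)/2) := Real.rpow_pos_of_pos (by norm_num) _
    rw [ha, hMa]
    rw [div_le_iff₀ (by positivity), inv_mul_eq_div, mul_div_assoc, div_self (ne_of_gt hapos),
      mul_one]
    linarith
end

section
/- Let p ∈ 𝔽₂[x₁,…,xₙ] be a uniformly chosen polynomial of degree at most 3, and let t = n − ⌈n^{3/4}⌉. Then the probability that there exists an affine subspace A ⊆ 𝔽₂ⁿ of codimension at most t such that the restriction of p to A has degree at most 2 is at most 2^{−Ω(n²)}. Concretely, this probability is at most 2^{−C(n^{3/4}, 3) + n(n+1)} where C(·,·) is the binomial coefficient. -/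
/-- Evaluation of the multilinear polynomial of degree `≤ d` with coefficients `c`. -/
def polyEval (n d : ℕ) (c : {S : Finset (Fin n) // S.card ≤ d} → ZMod 2)
    (x : Fin n → ZMod 2) : ZMod 2 :=
  ∑ S : {S : Finset (Fin n) // S.card ≤ d}, c S * ∏ i ∈ S.1, x i

/-- `f` is a polynomial function of degree at most `d` on `𝔽₂^m`. -/
def IsPolyDeg (m d : ℕ) (f : (Fin m → ZMod 2) → ZMod 2) : Prop :=
  ∃ c, ∀ x, f x = polyEval m d c x

/-- `φ : 𝔽₂^k → 𝔽₂ⁿ` is an injective affine map (a parameterization of an affine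
subspace of dimension `k`). -/
def IsAffineInj (k n : ℕ) (φ : (Fin k → ZMod 2) → (Fin n → ZMod 2)) : Prop :=
  Function.Injective φ ∧
    ∃ (L : (Fin k → ZMod 2) →ₗ[ZMod 2] (Fin n → ZMod 2)) (b : Fin n → ZMod 2),
      ∀ v, φ v = L v + b

open scoped Classical

namespace Stmt10

/-- The monomial function `x ↦ ∏ i ∈ S, x i`. -/
def monFun (m : ℕ) (S : Finset (Fin m)) : (Fin m → ZMod 2) → ZMod 2 :=
  fun x => ∏ i ∈ S, x i

/-- The set of monomial functions of degree at most `d`. -/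
def monSet (m d : ℕ) : Set ((Fin m → ZMod 2) → ZMod 2) :=
  Set.range (fun U : {S : Finset (Fin m) // S.card ≤ d} => monFun m U.1)

lemma zmod2_mul_self (a : ZMod 2) : a * a = a := by revert a; decide

lemma monFun_mul {m : ℕ} (S T : Finset (Fin m)) :
    monFun m S * monFun m T = monFun m (S ∪ T) := by
  funext x
  show (∏ i ∈ S, x i) * ∏ i ∈ T, x i = ∏ i ∈ S ∪ T, x i
  have hsub : S ∩ T ⊆ S ∪ T := Finset.inter_subset_left.trans Finset.subset_union_left
  have key : (∏ i ∈ S ∩ T, x i) * ∏ i ∈ S ∩ T, x i = ∏ i ∈ S ∩ T, x i := by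
    rw [← Finset.prod_mul_distrib]
    exact Finset.prod_congr rfl fun i _ => zmod2_mul_self (x i)
  rw [← Finset.prod_union_inter, ← Finset.prod_sdiff hsub, mul_assoc, key]

lemma isPolyDeg_iff {m : ℕ} (d : ℕ) (f : (Fin m → ZMod 2) → ZMod 2) :
    IsPolyDeg m d f ↔ f ∈ Submodule.span (ZMod 2) (monSet m d) := by
  rw [monSet, Submodule.mem_span_range_iff_exists_fun]
  constructor
  · rintro ⟨c, hc⟩
    refine ⟨c, ?_⟩
    funext x
    rw [Finset.sum_apply]
    simp only [Pi.smul_apply, smul_eq_mul]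
    exact (hc x).symm
  · rintro ⟨c, hc⟩
    refine ⟨c, fun x => ?_⟩
    rw [← hc, Finset.sum_apply]
    simp only [Pi.smul_apply, smul_eq_mul]
    rfl

lemma monSet_mono {m a b : ℕ} (h : a ≤ b) :
    Submodule.span (ZMod 2) (monSet m a) ≤ Submodule.span (ZMod 2) (monSet m b) := by
  apply Submodule.span_mono
  rintro f ⟨U, rfl⟩
  exact ⟨⟨U.1, U.2.trans h⟩, rfl⟩

lemma mul_mem_span {m a b : ℕ} {f g : (Fin m → ZMod 2) → ZMod 2}
    (hf : f ∈ Submodule.span (ZMod 2) (monSet m a))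
    (hg : g ∈ Submodule.span (ZMod 2) (monSet m b)) :
    f * g ∈ Submodule.span (ZMod 2) (monSet m (a + b)) := by
  induction hf using Submodule.span_induction with
  | mem x hx =>
    obtain ⟨U, rfl⟩ := hx
    induction hg using Submodule.span_induction with
    | mem y hy =>
      obtain ⟨V, rfl⟩ := hy
      rw [monFun_mul]
      exact Submodule.subset_span
        ⟨⟨U.1 ∪ V.1, (Finset.card_union_le _ _).trans (add_le_add U.2 V.2)⟩, rfl⟩
    | zero => rw [mul_zero]; exact zero_mem _
    | add y z _ _ hy hz => rw [mul_add]; exact add_mem hy hz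
    | smul c y _ hy => rw [mul_smul_comm]; exact Submodule.smul_mem _ _ hy
  | zero => rw [zero_mul]; exact zero_mem _
  | add x y _ _ hx hy => rw [add_mul]; exact add_mem hx hy
  | smul c x _ hx => rw [smul_mul_assoc]; exact Submodule.smul_mem _ _ hx

lemma prod_mem_span {m : ℕ} {ι : Type*} [DecidableEq ι] {S : Finset ι}
    {g : ι → (Fin m → ZMod 2) → ZMod 2}
    (hg : ∀ i ∈ S, g i ∈ Submodule.span (ZMod 2) (monSet m 1)) :
    (∏ i ∈ S, g i) ∈ Submodule.span (ZMod 2) (monSet m S.card) := by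
  induction S using Finset.induction with
  | empty =>
    rw [Finset.prod_empty]
    have h1 : (1 : (Fin m → ZMod 2) → ZMod 2) = monFun m ∅ := by
      funext x; simp [monFun]
    rw [h1, Finset.card_empty]
    exact Submodule.subset_span ⟨⟨∅, le_rfl⟩, rfl⟩
  | @insert a S ha ih =>
    rw [Finset.prod_insert ha, Finset.card_insert_of_notMem ha]
    have h1 := hg a (Finset.mem_insert_self a S)
    have h2 := ih fun i hi => hg i (Finset.mem_insert_of_mem hi)
    have h3 := mul_mem_span h1 h2
    rwa [Nat.add_comm 1 S.card] at h3

lemma coord_mem_span {k n : ℕ} (L : (Fin k → ZMod 2) →ₗ[ZMod 2] (Fin n → ZMod 2))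
    (b : Fin n → ZMod 2) (i : Fin n) :
    (fun v => L v i + b i) ∈ Submodule.span (ZMod 2) (monSet k 1) := by
  have hL : ∀ v : Fin k → ZMod 2,
      L v i = ∑ j, v j * L (fun t => if j = t then 1 else 0) i := by
    intro v
    conv_lhs => rw [pi_eq_sum_univ v]
    rw [map_sum, Finset.sum_apply]
    exact Finset.sum_congr rfl fun j _ => by rw [map_smul]; rfl
  have heq : (fun v : Fin k → ZMod 2 => L v i + b i)
      = (∑ j : Fin k, (L (fun t => if j = t then 1 else 0) i) • monFun k {j})
        + (b i) • monFun k ∅ := by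
    funext v
    rw [Pi.add_apply, Finset.sum_apply, hL v]
    simp only [Pi.smul_apply, smul_eq_mul, monFun, Finset.prod_singleton,
      Finset.prod_empty, mul_one]
    congr 1
    exact Finset.sum_congr rfl fun j _ => mul_comm _ _
  rw [heq]
  refine add_mem (Submodule.sum_mem _ fun j _ => Submodule.smul_mem _ _
    (Submodule.subset_span ⟨⟨{j}, by simp⟩, rfl⟩))
    (Submodule.smul_mem _ _ (Submodule.subset_span ⟨⟨∅, by simp⟩, rfl⟩))

lemma isPolyDeg_comp {k n d : ℕ} {f : (Fin n → ZMod 2) → ZMod 2} (hf : IsPolyDeg n d f)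
    (ψ : (Fin k → ZMod 2) → (Fin n → ZMod 2))
    (L : (Fin k → ZMod 2) →ₗ[ZMod 2] (Fin n → ZMod 2)) (b : Fin n → ZMod 2)
    (hψ : ∀ v, ψ v = L v + b) :
    IsPolyDeg k d (fun v => f (ψ v)) := by
  obtain ⟨c, hc⟩ := hf
  rw [isPolyDeg_iff]
  have hcoord : ∀ i : Fin n,
      (fun v => ψ v i) ∈ Submodule.span (ZMod 2) (monSet k 1) := by
    intro i
    have h1 : (fun v => ψ v i) = fun v => L v i + b i := by
      funext v; rw [hψ]; rfl
    rw [h1]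
    exact coord_mem_span L b i
  have heq : (fun v => f (ψ v)) = ∑ U : {S : Finset (Fin n) // S.card ≤ d},
      c U • ∏ i ∈ U.1, (fun v => ψ v i) := by
    funext v
    rw [Finset.sum_apply, hc (ψ v)]
    refine Finset.sum_congr rfl fun U _ => ?_
    rw [Pi.smul_apply, smul_eq_mul, Finset.prod_apply]
  rw [heq]
  refine Submodule.sum_mem _ fun U _ => Submodule.smul_mem _ _ ?_
  exact monSet_mono U.2 (prod_mem_span fun i _ => hcoord i)

/-- Möbius coefficient extraction. -/
def coef (m : ℕ) (f : (Fin m → ZMod 2) → ZMod 2) (T : Finset (Fin m)) : ZMod 2 :=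
  ∑ S ∈ T.powerset, f (fun i => if i ∈ S then 1 else 0)

lemma card_filter_subset {m : ℕ} (U T : Finset (Fin m)) :
    (T.powerset.filter (fun S => U ⊆ S)).card
      = if U ⊆ T then 2 ^ (T.card - U.card) else 0 := by
  by_cases h : U ⊆ T
  · rw [if_pos h]
    have himg : T.powerset.filter (fun S => U ⊆ S)
        = (T \ U).powerset.image (fun A => A ∪ U) := by
      ext S
      simp only [Finset.mem_filter, Finset.mem_powerset, Finset.mem_image]
      constructor
      · rintro ⟨hST, hUS⟩
        refine ⟨S \ U, Finset.sdiff_subset_sdiff hST Finset.Subset.rfl,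
          Finset.sdiff_union_of_subset hUS⟩
      · rintro ⟨A, hA, rfl⟩
        exact ⟨Finset.union_subset (hA.trans (Finset.sdiff_subset)) h,
          Finset.subset_union_right⟩
    have hinj : Set.InjOn (fun A => A ∪ U) ((T \ U).powerset : Set (Finset (Fin m))) := by
      intro A hA B hB hAB
      simp only [Finset.coe_powerset, Set.mem_preimage, Set.mem_powerset_iff,
        Finset.coe_subset] at hA hB
      have hdA : Disjoint A U := (Finset.subset_sdiff.mp hA).2
      have hdB : Disjoint B U := (Finset.subset_sdiff.mp hB).2
      have : (A ∪ U) \ U = (B ∪ U) \ U := by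
        rw [show A ∪ U = B ∪ U from hAB]
      rwa [Finset.union_sdiff_cancel_right hdA, Finset.union_sdiff_cancel_right hdB] at this
    rw [himg, Finset.card_image_of_injOn hinj, Finset.card_powerset,
      Finset.card_sdiff_of_subset h]
  · rw [if_neg h, Finset.card_eq_zero, Finset.filter_eq_empty_iff]
    intro S hS hUS
    exact h (hUS.trans (Finset.mem_powerset.mp hS))

lemma sum_ind {m : ℕ} (U T : Finset (Fin m)) :
    (∑ S ∈ T.powerset, ∏ i ∈ U, (if i ∈ S then (1 : ZMod 2) else 0))
      = if U = T then 1 else 0 := by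
  have h1 : ∀ S : Finset (Fin m),
      (∏ i ∈ U, (if i ∈ S then (1 : ZMod 2) else 0)) = if U ⊆ S then 1 else 0 := by
    intro S
    rw [Finset.prod_boole]
    congr 1
  simp only [h1]
  rw [Finset.sum_boole]
  rw [show (Finset.filter (fun S => U ⊆ S) T.powerset) =
    (T.powerset.filter (fun S => U ⊆ S)) from rfl]
  rw [card_filter_subset]
  by_cases hUT : U = T
  · subst hUT
    simp
  · by_cases hsub : U ⊆ T
    · rw [if_pos hsub, if_neg hUT]
      have hlt : U.card < T.card := Finset.card_lt_card (lt_of_le_of_ne hsub hUT)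
      obtain ⟨e, he⟩ : ∃ e, T.card - U.card = e + 1 :=
        ⟨T.card - U.card - 1, by omega⟩
      rw [he, pow_succ]
      push_cast
      rw [show ((2 : ZMod 2)) = 0 by decide]
      ring
    · rw [if_neg hsub, if_neg hUT]
      simp

lemma coef_polyEval {m : ℕ} (d : ℕ) (c : {S : Finset (Fin m) // S.card ≤ d} → ZMod 2)
    (T : Finset (Fin m)) :
    coef m (polyEval m d c) T = if h : T.card ≤ d then c ⟨T, h⟩ else 0 := by
  unfold coef polyEval
  rw [Finset.sum_comm]
  have h1 : ∀ U : {S : Finset (Fin m) // S.card ≤ d},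
      (∑ S ∈ T.powerset, c U * ∏ i ∈ U.1, (if i ∈ S then (1 : ZMod 2) else 0))
        = c U * (if U.1 = T then 1 else 0) := by
    intro U
    rw [← Finset.mul_sum, sum_ind]
  simp only [h1]
  by_cases hT : T.card ≤ d
  · rw [dif_pos hT]
    rw [Finset.sum_eq_single ⟨T, hT⟩]
    · simp
    · intro U _ hU
      rw [if_neg, mul_zero]
      exact fun h => hU (Subtype.ext h)
    · intro h
      exact absurd (Finset.mem_univ _) h
  · rw [dif_neg hT]
    apply Finset.sum_eq_zero
    intro U _
    rw [if_neg, mul_zero]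
    rintro rfl
    exact hT U.2

def canL {m n : ℕ} (A : Fin m → (Fin n → ZMod 2)) :
    (Fin m → ZMod 2) →ₗ[ZMod 2] (Fin n → ZMod 2) :=
  ∑ j, (LinearMap.proj j).smulRight (A j)

lemma canL_apply {m n : ℕ} (A : Fin m → (Fin n → ZMod 2)) (v : Fin m → ZMod 2) :
    canL A v = ∑ j, v j • A j := by
  rw [canL, LinearMap.sum_apply]
  exact Finset.sum_congr rfl fun j _ => rfl

lemma affine_rep {m n : ℕ} (L : (Fin m → ZMod 2) →ₗ[ZMod 2] (Fin n → ZMod 2))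
    (v : Fin m → ZMod 2) :
    L v = canL (fun j => L (fun t => if j = t then 1 else 0)) v := by
  rw [canL_apply]
  conv_lhs => rw [pi_eq_sum_univ v]
  rw [map_sum]
  exact Finset.sum_congr rfl fun j _ => by rw [map_smul]

def extL {m k : ℕ} (h : m ≤ k) : (Fin m → ZMod 2) →ₗ[ZMod 2] (Fin k → ZMod 2) where
  toFun v := fun i => if h' : (i : ℕ) < m then v ⟨i, h'⟩ else 0
  map_add' v w := by funext i; by_cases h' : (i : ℕ) < m <;> simp [h']
  map_smul' a v := by funext i; by_cases h' : (i : ℕ) < m <;> simp [h']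

lemma extL_inj {m k : ℕ} (h : m ≤ k) : Function.Injective (extL h) := by
  intro v w hvw
  funext j
  have h2 := congrFun hvw (Fin.castLE h j)
  have h3 : ((Fin.castLE h j : Fin k) : ℕ) < m := j.isLt
  simpa [extL, h3] using h2

end Stmt10

set_option maxHeartbeats 2000000 in
open Stmt10 in
/-- Per-subspace counting lemma. -/
lemma count_lemma {n m : ℕ} (ψ : (Fin m → ZMod 2) → (Fin n → ZMod 2))
    (hψ : IsAffineInj m n ψ) :
    (Finset.univ.filter (fun c : {S : Finset (Fin n) // S.card ≤ 3} → ZMod 2 =>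
      IsPolyDeg m 2 (fun v => polyEval n 3 c (ψ v)))).card * 2 ^ (m.choose 3)
    ≤ Fintype.card ({S : Finset (Fin n) // S.card ≤ 3} → ZMod 2) := by
  obtain ⟨hinj, L, b, hLb⟩ := hψ
  -- the linear map extracting degree-3 coefficients of the restriction
  set V := {S : Finset (Fin n) // S.card ≤ 3} → ZMod 2
  set W := ({T : Finset (Fin m) // T.card = 3} → ZMod 2)
  have hpa : ∀ (c c' : V) (x), polyEval n 3 (c + c') x = polyEval n 3 c x + polyEval n 3 c' x := by
    intro c c' x
    unfold polyEval
    rw [← Finset.sum_add_distrib]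
    exact Finset.sum_congr rfl fun U _ => by rw [Pi.add_apply, add_mul]
  have hps : ∀ (a : ZMod 2) (c : V) (x), polyEval n 3 (a • c) x = a * polyEval n 3 c x := by
    intro a c x
    unfold polyEval
    rw [Finset.mul_sum]
    exact Finset.sum_congr rfl fun U _ => by
      rw [Pi.smul_apply, smul_eq_mul, mul_assoc]
  let Φ : V →ₗ[ZMod 2] W :=
    { toFun := fun c => fun T => coef m (fun v => polyEval n 3 c (ψ v)) T.1
      map_add' := by
        intro c c'
        funext T
        show coef m (fun v => polyEval n 3 (c + c') (ψ v)) T.1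
          = coef m (fun v => polyEval n 3 c (ψ v)) T.1 + coef m (fun v => polyEval n 3 c' (ψ v)) T.1
        unfold coef
        rw [← Finset.sum_add_distrib]
        exact Finset.sum_congr rfl fun S _ => hpa c c' _
      map_smul' := by
        intro a c
        funext T
        show coef m (fun v => polyEval n 3 (a • c) (ψ v)) T.1
          = a * coef m (fun v => polyEval n 3 c (ψ v)) T.1
        unfold coef
        rw [Finset.mul_sum]
        exact Finset.sum_congr rfl fun S _ => hps a c _ }
  -- the bad set is inside the kernel of Φ
  have hker : (Finset.univ.filter (fun c : V =>
      IsPolyDeg m 2 (fun v => polyEval n 3 c (ψ v))))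
      ⊆ Finset.univ.filter (fun c : V => Φ c = 0) := by
    intro c hc
    rw [Finset.mem_filter] at hc ⊢
    obtain ⟨-, c₂, hc₂⟩ := hc
    refine ⟨Finset.mem_univ _, ?_⟩
    funext T
    show coef m (fun v => polyEval n 3 c (ψ v)) T.1 = 0
    have : (fun v => polyEval n 3 c (ψ v)) = polyEval m 2 c₂ := funext hc₂
    rw [this, coef_polyEval]
    rw [dif_neg]
    rw [T.2]
    norm_num
  -- Φ is surjective
  have hLker : LinearMap.ker L = ⊥ := by
    rw [LinearMap.ker_eq_bot]
    intro v w hvw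
    apply hinj
    rw [hLb, hLb, hvw]
  obtain ⟨M, hM⟩ := L.exists_leftInverse_of_injective hLker
  have hMψ : ∀ v, M (ψ v - b) = v := by
    intro v
    rw [hLb, add_sub_cancel_right]
    exact DFunLike.congr_fun hM v
  have hsurj : Function.Surjective Φ := by
    intro w
    set cq : {S : Finset (Fin m) // S.card ≤ 3} → ZMod 2 :=
      fun U => if h : U.1.card = 3 then w ⟨U.1, h⟩ else 0 with hcq
    have hq : IsPolyDeg n 3 (fun y => polyEval m 3 cq (M (y - b))) := by
      refine isPolyDeg_comp ⟨cq, fun x => rfl⟩ (fun y => M (y - b)) M (-(M b)) ?_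
      intro y
      show M (y - b) = M y + -(M b)
      rw [map_sub, sub_eq_add_neg]
    obtain ⟨c, hc⟩ := hq
    refine ⟨c, ?_⟩
    funext T
    show coef m (fun v => polyEval n 3 c (ψ v)) T.1 = w T
    have heq : (fun v => polyEval n 3 c (ψ v)) = polyEval m 3 cq := by
      funext v
      rw [← hc (ψ v)]
      show polyEval m 3 cq (M (ψ v - b)) = polyEval m 3 cq v
      rw [hMψ]
    rw [heq, coef_polyEval, dif_pos (show T.1.card ≤ 3 by rw [T.2])]
    rw [hcq]
    simp only [dif_pos T.2]
  -- cardinality bookkeeping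
  have hcard : Fintype.card V = Fintype.card (LinearMap.ker Φ) * Fintype.card W := by
    have h1 := Submodule.card_eq_card_quotient_mul_card (LinearMap.ker Φ)
    have h2 : Nat.card (V ⧸ LinearMap.ker Φ) = Nat.card W :=
      Nat.card_congr (Φ.quotKerEquivOfSurjective hsurj).toEquiv
    rw [h2] at h1
    simpa [Nat.card_eq_fintype_card] using h1
  have hkercard : (Finset.univ.filter (fun c : V => Φ c = 0)).card
      = Fintype.card (LinearMap.ker Φ) := by
    rw [← Fintype.card_subtype]
    exact Fintype.card_congr (Equiv.subtypeEquivRight fun c =>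
      (LinearMap.mem_ker (f := Φ)).symm).symm
  have hW : Fintype.card W = 2 ^ (m.choose 3) := by
    rw [Fintype.card_fun, ZMod.card, Fintype.card_finset_len, Fintype.card_fin]
  calc (Finset.univ.filter (fun c : V =>
      IsPolyDeg m 2 (fun v => polyEval n 3 c (ψ v)))).card * 2 ^ (m.choose 3)
      ≤ (Finset.univ.filter (fun c : V => Φ c = 0)).card * 2 ^ (m.choose 3) :=
        Nat.mul_le_mul_right _ (Finset.card_le_card hker)
    _ = Fintype.card (LinearMap.ker Φ) * Fintype.card W := by rw [hkercard, hW]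
    _ = Fintype.card V := hcard.symm

open Stmt10 in
open scoped Classical in
theorem stmt_10 (n : ℕ) :
    ((Finset.univ.filter (fun c : {S : Finset (Fin n) // S.card ≤ 3} → ZMod 2 =>
        ∃ k : ℕ, n - (n - ⌈(n : ℝ) ^ ((3 : ℝ) / 4)⌉₊) ≤ k ∧
          ∃ φ : (Fin k → ZMod 2) → (Fin n → ZMod 2),
            IsAffineInj k n φ ∧
              IsPolyDeg k 2 (fun v => polyEval n 3 c (φ v)))).card : ℝ)
      / (Fintype.card ({S : Finset (Fin n) // S.card ≤ 3} → ZMod 2) : ℝ)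
      ≤ (2 : ℝ) ^ (((n * (n + 1) : ℕ) : ℤ)
          - (Nat.choose ⌈(n : ℝ) ^ ((3 : ℝ) / 4)⌉₊ 3 : ℤ)) := by
  classical
  set m := ⌈(n : ℝ) ^ ((3 : ℝ) / 4)⌉₊ with hm
  have hmn : m ≤ n := by
    rw [hm, Nat.ceil_le]
    rcases Nat.eq_zero_or_pos n with h0 | h0
    · subst h0
      rw [Nat.cast_zero, Real.zero_rpow (by norm_num)]
    · calc (n : ℝ) ^ ((3 : ℝ) / 4) ≤ (n : ℝ) ^ (1 : ℝ) :=
          Real.rpow_le_rpow_of_exponent_le (by exact_mod_cast h0) (by norm_num)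
        _ = n := Real.rpow_one _
  have hsub : n - (n - m) = m := Nat.sub_sub_self hmn
  set Bad := Finset.univ.filter (fun c : {S : Finset (Fin n) // S.card ≤ 3} → ZMod 2 =>
        ∃ k : ℕ, n - (n - m) ≤ k ∧
          ∃ φ : (Fin k → ZMod 2) → (Fin n → ZMod 2),
            IsAffineInj k n φ ∧
              IsPolyDeg k 2 (fun v => polyEval n 3 c (φ v))) with hBad
  set I : Finset ((Fin m → (Fin n → ZMod 2)) × (Fin n → ZMod 2)) :=
    Finset.univ.filter (fun Ab => Function.Injective (fun v => canL Ab.1 v + Ab.2)) with hI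
  set Bφ : ((Fin m → (Fin n → ZMod 2)) × (Fin n → ZMod 2)) →
      Finset ({S : Finset (Fin n) // S.card ≤ 3} → ZMod 2) :=
    fun Ab => Finset.univ.filter (fun c =>
      IsPolyDeg m 2 (fun v => polyEval n 3 c (canL Ab.1 v + Ab.2))) with hBφ
  have hcover : Bad ⊆ I.biUnion Bφ := by
    intro c hc
    rw [hBad, Finset.mem_filter] at hc
    obtain ⟨-, k, hk, φ, ⟨hφinj, L, b, hLb⟩, hpoly⟩ := hc
    rw [hsub] at hk
    have hψaff : ∀ v, φ (extL hk v) = (L.comp (extL hk)) v + b := fun v => hLb _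
    set A : Fin m → (Fin n → ZMod 2) :=
      fun j => (L.comp (extL hk)) (fun t => if j = t then 1 else 0) with hA
    have hcaneq : ∀ v, canL A v + b = φ (extL hk v) := by
      intro v
      rw [hψaff v, ← affine_rep]
    rw [Finset.mem_biUnion]
    refine ⟨(A, b), ?_, ?_⟩
    · rw [hI, Finset.mem_filter]
      refine ⟨Finset.mem_univ _, ?_⟩
      have heq : (fun v => canL A v + b) = fun v => φ (extL hk v) := funext hcaneq
      show Function.Injective (fun v => canL A v + b)
      rw [heq]
      exact hφinj.comp (extL_inj hk)
    · rw [hBφ, Finset.mem_filter]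
      refine ⟨Finset.mem_univ _, ?_⟩
      have h2 : IsPolyDeg m 2 (fun v => (fun w => polyEval n 3 c (φ w)) (extL hk v)) :=
        isPolyDeg_comp hpoly (extL hk) (extL hk) 0 (fun v => (add_zero _).symm)
      have heq : (fun v => polyEval n 3 c (canL A v + b))
          = (fun v => polyEval n 3 c (φ (extL hk v))) := by
        funext v
        rw [hcaneq]
      show IsPolyDeg m 2 (fun v => polyEval n 3 c (canL A v + b))
      rw [heq]
      exact h2
  have hIcard : I.card ≤ 2 ^ (n * (n + 1)) := by
    have h1 : I.card ≤ Fintype.card ((Fin m → (Fin n → ZMod 2)) × (Fin n → ZMod 2)) := by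
      rw [← Finset.card_univ]
      exact Finset.card_le_card (Finset.filter_subset _ _)
    have h2 : Fintype.card ((Fin m → (Fin n → ZMod 2)) × (Fin n → ZMod 2))
        = 2 ^ (n * m + n) := by
      rw [Fintype.card_prod, Fintype.card_fun, Fintype.card_fun, ZMod.card,
        Fintype.card_fin, Fintype.card_fin, ← pow_mul, ← pow_add, Nat.mul_comm n m]
    have h3 : n * m + n ≤ n * (n + 1) := by
      have h4 := Nat.mul_le_mul_left n hmn
      have h5 : n * (n + 1) = n * n + n := Nat.mul_succ n n
      omega
    calc I.card ≤ 2 ^ (n * m + n) := h2 ▸ h1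
      _ ≤ 2 ^ (n * (n + 1)) := Nat.pow_le_pow_right (by norm_num) h3
  have hcount : ∀ Ab ∈ I, (Bφ Ab).card * 2 ^ (m.choose 3)
      ≤ Fintype.card ({S : Finset (Fin n) // S.card ≤ 3} → ZMod 2) := by
    intro Ab hAb
    rw [hI, Finset.mem_filter] at hAb
    exact count_lemma _ ⟨hAb.2, canL Ab.1, Ab.2, fun v => rfl⟩
  have hN : Bad.card * 2 ^ (m.choose 3)
      ≤ 2 ^ (n * (n + 1)) * Fintype.card ({S : Finset (Fin n) // S.card ≤ 3} → ZMod 2) := by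
    calc Bad.card * 2 ^ (m.choose 3)
        ≤ (I.biUnion Bφ).card * 2 ^ (m.choose 3) :=
          Nat.mul_le_mul_right _ (Finset.card_le_card hcover)
      _ ≤ (∑ Ab ∈ I, (Bφ Ab).card) * 2 ^ (m.choose 3) :=
          Nat.mul_le_mul_right _ Finset.card_biUnion_le
      _ = ∑ Ab ∈ I, (Bφ Ab).card * 2 ^ (m.choose 3) := Finset.sum_mul _ _ _
      _ ≤ ∑ _Ab ∈ I, Fintype.card ({S : Finset (Fin n) // S.card ≤ 3} → ZMod 2) :=
          Finset.sum_le_sum hcount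
      _ = I.card * Fintype.card ({S : Finset (Fin n) // S.card ≤ 3} → ZMod 2) := by
          rw [Finset.sum_const, smul_eq_mul]
      _ ≤ 2 ^ (n * (n + 1)) * Fintype.card ({S : Finset (Fin n) // S.card ≤ 3} → ZMod 2) :=
          Nat.mul_le_mul_right _ hIcard
  have hVpos : (0 : ℝ) < (Fintype.card ({S : Finset (Fin n) // S.card ≤ 3} → ZMod 2) : ℝ) := by
    exact_mod_cast Fintype.card_pos
  rw [div_le_iff₀ hVpos]
  have h2pos : (0 : ℝ) < (2 : ℝ) ^ (m.choose 3) := by positivity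
  rw [zpow_sub₀ (by norm_num : (2 : ℝ) ≠ 0), zpow_natCast, zpow_natCast,
    div_mul_eq_mul_div, le_div_iff₀ h2pos]
  calc (Bad.card : ℝ) * 2 ^ (m.choose 3)
      ≤ 2 ^ (n * (n + 1))
        * (Fintype.card ({S : Finset (Fin n) // S.card ≤ 3} → ZMod 2) : ℝ) := by
        exact_mod_cast hN
    _ = _ := rfl
end

section
/- Fix a codimension-t' affine subspace A of 𝔽₂ⁿ given by t' independent affine equations. If p is a uniformly random multilinear polynomial of degree at most d in n variables over 𝔽₂, then the polynomial obtained by restricting p to A (expressed in the n−t' free variables) is a uniformly random multilinear polynomial of degree at most d in n−t' variables. -/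
namespace Stmt11Aux

def mono (m : ℕ) (T : Finset (Fin m)) : (Fin m → ZMod 2) → ZMod 2 :=
  fun v => ∏ i ∈ T, v i

def Mspan (m k : ℕ) : Submodule (ZMod 2) ((Fin m → ZMod 2) → ZMod 2) :=
  Submodule.span (ZMod 2) {f | ∃ T : Finset (Fin m), T.card ≤ k ∧ f = mono m T}

lemma mono_mem {m k : ℕ} (T : Finset (Fin m)) (hT : T.card ≤ k) : mono m T ∈ Mspan m k :=
  Submodule.subset_span ⟨T, hT, rfl⟩

lemma Mspan_le {m k k' : ℕ} (h : k ≤ k') : Mspan m k ≤ Mspan m k' :=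
  Submodule.span_mono (fun _ ⟨T, hT, hf⟩ => ⟨T, hT.trans h, hf⟩)

lemma zmod2_mul_self (x : ZMod 2) : x * x = x := by fin_cases x <;> rfl

lemma mono_insert {m : ℕ} (j : Fin m) (T : Finset (Fin m)) (v : Fin m → ZMod 2) :
    mono m (insert j T) v = v j * mono m T v := by
  by_cases h : j ∈ T
  · rw [Finset.insert_eq_self.2 h, mono, ← Finset.mul_prod_erase T _ h, ← mul_assoc,
      zmod2_mul_self]
  · exact Finset.prod_insert h

lemma mul_mem_span {m k : ℕ} (φ : (Fin m → ZMod 2) →ₗ[ZMod 2] ZMod 2) (β : ZMod 2)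
    {f : (Fin m → ZMod 2) → ZMod 2} (hf : f ∈ Mspan m k) :
    (fun v => (φ v + β) * f v) ∈ Mspan m (k + 1) := by
  induction hf using Submodule.span_induction with
  | mem f hf =>
    obtain ⟨T, hT, rfl⟩ := hf
    have key : (fun v => (φ v + β) * mono m T v) =
        (∑ j : Fin m, φ (fun i => if j = i then 1 else 0) • mono m (insert j T)) +
          β • mono m T := by
      funext v
      simp only [Finset.sum_apply, Pi.add_apply, Pi.smul_apply, smul_eq_mul]
      rw [LinearMap.pi_apply_eq_sum_univ φ v, add_mul, Finset.sum_mul]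
      congr 1
      refine Finset.sum_congr rfl fun j _ => ?_
      rw [mono_insert, smul_eq_mul]
      ring
    rw [key]
    refine add_mem (Submodule.sum_mem _ fun j _ => Submodule.smul_mem _ _
      (mono_mem _ ((Finset.card_insert_le j T).trans (Nat.add_le_add_right hT 1))))
      (Submodule.smul_mem _ _ (mono_mem _ (hT.trans (Nat.le_succ k))))
  | zero =>
    have : (fun v => (φ v + β) * (0 : (Fin m → ZMod 2) → ZMod 2) v) = 0 := by
      funext v; simp
    rw [this]; exact Submodule.zero_mem _
  | add f g hf hg ihf ihg =>
    have : (fun v => (φ v + β) * (f + g) v) =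
        (fun v => (φ v + β) * f v) + (fun v => (φ v + β) * g v) := by
      funext v; simp [mul_add]
    rw [this]; exact add_mem ihf ihg
  | smul a f hf ih =>
    have : (fun v => (φ v + β) * (a • f) v) = a • (fun v => (φ v + β) * f v) := by
      funext v; simp [mul_comm, mul_assoc, mul_left_comm]
    rw [this]; exact Submodule.smul_mem _ _ ih

lemma prod_mem_span {m n : ℕ} (S : Finset (Fin n))
    (ℓ : Fin n → ((Fin m → ZMod 2) →ₗ[ZMod 2] ZMod 2)) (β : Fin n → ZMod 2) :
    (fun v => ∏ i ∈ S, (ℓ i v + β i)) ∈ Mspan m S.card := by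
  induction S using Finset.cons_induction with
  | empty =>
    have : (fun _ : Fin m → ZMod 2 => (1 : ZMod 2)) = mono m ∅ := by
      funext v; simp [mono]
    simpa [this] using mono_mem (m := m) ∅ le_rfl
  | cons i S hi ih =>
    have : (fun v => ∏ j ∈ Finset.cons i S hi, (ℓ j v + β j)) =
        (fun v => (ℓ i v + β i) * ∏ j ∈ S, (ℓ j v + β j)) := by
      funext v; rw [Finset.prod_cons]
    rw [this, Finset.card_cons]
    exact mul_mem_span (ℓ i) (β i) ih

lemma restrict_mem_span {n m d : ℕ} (c : {S : Finset (Fin n) // S.card ≤ d} → ZMod 2)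
    (A : (Fin m → ZMod 2) →ₗ[ZMod 2] (Fin n → ZMod 2)) (b : Fin n → ZMod 2) :
    (fun v => polyEval n d c (A v + b)) ∈ Mspan m d := by
  have h : ∀ S : {S : Finset (Fin n) // S.card ≤ d},
      (fun v => ∏ i ∈ S.1, (A v + b) i) ∈ Mspan m d := by
    intro S
    have := prod_mem_span (m := m) S.1 (fun i => (LinearMap.proj i).comp A) b
    exact Mspan_le S.2 (by simpa using this)
  have key : (fun v => polyEval n d c (A v + b)) =
      ∑ S : {S : Finset (Fin n) // S.card ≤ d}, c S • (fun v => ∏ i ∈ S.1, (A v + b) i) := by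
    funext v
    simp [polyEval, Finset.sum_apply]
  rw [key]
  exact Submodule.sum_mem _ fun S _ => Submodule.smul_mem _ _ (h S)

lemma polyEval_add {n d : ℕ} (c c' : {S : Finset (Fin n) // S.card ≤ d} → ZMod 2)
    (x : Fin n → ZMod 2) :
    polyEval n d (c + c') x = polyEval n d c x + polyEval n d c' x := by
  simp [polyEval, add_mul, Finset.sum_add_distrib]

lemma span_isPolyDeg {m d : ℕ} {f : (Fin m → ZMod 2) → ZMod 2} (hf : f ∈ Mspan m d) :
    IsPolyDeg m d f := by
  induction hf using Submodule.span_induction with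
  | mem f hf =>
    obtain ⟨T, hT, rfl⟩ := hf
    refine ⟨fun S => if S = ⟨T, hT⟩ then 1 else 0, fun x => ?_⟩
    simp [polyEval, mono, ite_mul, Finset.sum_ite_eq']
  | zero => exact ⟨0, fun x => by simp [polyEval]⟩
  | add f g hf hg ihf ihg =>
    obtain ⟨c, hc⟩ := ihf; obtain ⟨c', hc'⟩ := ihg
    exact ⟨c + c', fun x => by simp [polyEval_add, hc, hc']⟩
  | smul a f hf ih =>
    obtain ⟨c, hc⟩ := ih
    refine ⟨a • c, fun x => ?_⟩
    simp only [Pi.smul_apply, smul_eq_mul, hc, polyEval, Finset.mul_sum]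
    exact Finset.sum_congr rfl fun S _ => by ring

lemma restrict_isPolyDeg {n m d : ℕ} (c : {S : Finset (Fin n) // S.card ≤ d} → ZMod 2)
    (A : (Fin m → ZMod 2) →ₗ[ZMod 2] (Fin n → ZMod 2)) (b : Fin n → ZMod 2) :
    IsPolyDeg m d (fun v => polyEval n d c (A v + b)) :=
  span_isPolyDeg (restrict_mem_span c A b)

end Stmt11Aux


open Stmt11Aux

/-- Fix a codimension-`t'` affine subspace of `𝔽₂ⁿ`, parameterized by an
injective affine map `v ↦ L v + b` from `𝔽₂^{n-t'}`. If `p` is a uniformly random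
multilinear polynomial of degree at most `d` in `n` variables, then its restriction to the
subspace is a uniformly random polynomial function of degree at most `d` in `n - t'`
variables: every restriction has degree at most `d`, and each degree-`≤ d` polynomial
function arises from the same number of coefficient choices. -/
theorem stmt_11 (n t' d : ℕ) (ht : t' ≤ n)
    (L : (Fin (n - t') → ZMod 2) →ₗ[ZMod 2] (Fin n → ZMod 2))
    (hL : Function.Injective L) (b : Fin n → ZMod 2) :
    (∀ c : {S : Finset (Fin n) // S.card ≤ d} → ZMod 2,
      IsPolyDeg (n - t') d (fun v => polyEval n d c (L v + b))) ∧
    ∀ g₁ g₂ : (Fin (n - t') → ZMod 2) → ZMod 2,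
      IsPolyDeg (n - t') d g₁ → IsPolyDeg (n - t') d g₂ →
      (Finset.univ.filter (fun c : {S : Finset (Fin n) // S.card ≤ d} → ZMod 2 =>
          ∀ v, polyEval n d c (L v + b) = g₁ v)).card =
      (Finset.univ.filter (fun c : {S : Finset (Fin n) // S.card ≤ d} → ZMod 2 =>
          ∀ v, polyEval n d c (L v + b) = g₂ v)).card := by
  constructor
  · intro c
    exact restrict_isPolyDeg c L b
  · -- surjectivity
    obtain ⟨M, hM⟩ := LinearMap.exists_leftInverse_of_injective L (LinearMap.ker_eq_bot.mpr hL)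
    have surj : ∀ g : (Fin (n - t') → ZMod 2) → ZMod 2, IsPolyDeg (n - t') d g →
        ∃ c : {S : Finset (Fin n) // S.card ≤ d} → ZMod 2,
          ∀ v, polyEval n d c (L v + b) = g v := by
      intro g hg
      obtain ⟨c', hc'⟩ := hg
      obtain ⟨c, hc⟩ := restrict_isPolyDeg (n := n - t') (m := n) c' M (M b)
      refine ⟨c, fun v => ?_⟩
      have hML : M (L v) = v := by
        have := LinearMap.congr_fun hM v
        simpa using this
      have h1 : M (L v + b) + M b = v := by
        rw [map_add, hML, add_assoc]
        have : M b + M b = 0 := by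
          funext i; exact CharTwo.add_self_eq_zero _
        rw [this, add_zero]
      calc polyEval n d c (L v + b) = polyEval (n - t') d c' (M (L v + b) + M b) :=
            (hc (L v + b)).symm
        _ = polyEval (n - t') d c' v := by rw [h1]
        _ = g v := (hc' v).symm
    intro g₁ g₂ h₁ h₂
    obtain ⟨c₁, hc₁⟩ := surj g₁ h₁
    obtain ⟨c₂, hc₂⟩ := surj g₂ h₂
    have cancel : ∀ x y z : ZMod 2, x + y + z + z + y = x := by decide
    refine Finset.card_bij' (fun c _ => c + c₁ + c₂) (fun c _ => c + c₂ + c₁) ?_ ?_ ?_ ?_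
    · intro c hc
      simp only [Finset.mem_filter, Finset.mem_univ, true_and] at hc ⊢
      intro v
      rw [polyEval_add, polyEval_add, hc v, hc₁ v, hc₂ v]
      have : ∀ x y : ZMod 2, x + x + y = y := by decide
      exact this _ _
    · intro c hc
      simp only [Finset.mem_filter, Finset.mem_univ, true_and] at hc ⊢
      intro v
      rw [polyEval_add, polyEval_add, hc v, hc₂ v, hc₁ v]
      have : ∀ x y : ZMod 2, x + x + y = y := by decide
      exact this _ _
    · intro c _
      funext S
      simp only [Pi.add_apply]
      exact cancel _ _ _
    · intro c _
      funext S
      simp only [Pi.add_apply]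
      exact cancel _ _ _
end
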